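/- If a tree T belongs to the family 𝒪, then γ(T) = γ_t2(T). -/

import Mathlib

open SimpleGraph

/-- A dominating set: every vertex outside `S` has a neighbor in `S`. -/
def IsDominatingSet {V : Type} (G : SimpleGraph V) (S : Set V) : Prop :=
  ∀ v ∉ S, ∃ u ∈ S, G.Adj u v

/-- A total dominating set: every vertex has a neighbor in `S`. -/
def IsTotalDominatingSet {V : Type} (G : SimpleGraph V) (S : Set V) : Prop :=
  ∀ v : V, ∃ u ∈ S, G.Adj u v

/-- `u` is within distance two of `v`. -/
def WithinTwo {V : Type} (G : SimpleGraph V) (u v : V) : Prop :=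
  G.Adj u v ∨ ∃ w, G.Adj u w ∧ G.Adj w v

/-- A semitotal dominating set: a dominating set in which every vertex is within
distance two of another vertex of the set. -/
def IsSemitotalDominatingSet {V : Type} (G : SimpleGraph V) (S : Set V) : Prop :=
  IsDominatingSet G S ∧ ∀ v ∈ S, ∃ u ∈ S, u ≠ v ∧ WithinTwo G u v

/-- The domination number `γ(G)`. -/
noncomputable def dominationNumber {V : Type} (G : SimpleGraph V) : ℕ :=
  sInf {n | ∃ S : Set V, IsDominatingSet G S ∧ S.ncard = n}

/-- The total domination number `γ_t(G)`. -/
noncomputable def totalDominationNumber {V : Type} (G : SimpleGraph V) : ℕ :=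
  sInf {n | ∃ S : Set V, IsTotalDominatingSet G S ∧ S.ncard = n}

/-- The semitotal domination number `γ_t2(G)`. -/
noncomputable def semitotalDominationNumber {V : Type} (G : SimpleGraph V) : ℕ :=
  sInf {n | ∃ S : Set V, IsSemitotalDominatingSet G S ∧ S.ncard = n}

/-- A leaf: a vertex of degree one. -/
def IsLeaf {V : Type} (G : SimpleGraph V) (v : V) : Prop :=
  (G.neighborSet v).ncard = 1

/-- A support vertex: a vertex adjacent to a leaf. -/
def IsSupport {V : Type} (G : SimpleGraph V) (v : V) : Prop :=
  ∃ u, G.Adj v u ∧ IsLeaf G u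

/-- A star: a graph isomorphic to `K_{1,m}` for some `m ≥ 1`. -/
def IsStar {V : Type} (G : SimpleGraph V) : Prop :=
  ∃ m : ℕ, 1 ≤ m ∧ Nonempty (G ≃g completeBipartiteGraph Unit (Fin m))

/-- The graph obtained from the disjoint union of `G` and `H` by adding
the single edge joining `v : V` to `w : W`. -/
def attach {V W : Type} (G : SimpleGraph V) (H : SimpleGraph W) (v : V) (w : W) :
    SimpleGraph (V ⊕ W) where
  Adj x y :=
    match x, y with
    | Sum.inl a, Sum.inl b => G.Adj a b
    | Sum.inr a, Sum.inr b => H.Adj a b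
    | Sum.inl a, Sum.inr b => a = v ∧ b = w
    | Sum.inr a, Sum.inl b => b = v ∧ a = w
  symm := by
    constructor
    rintro (a | a) (b | b) h
    · exact G.adj_symm h
    · exact ⟨h.1, h.2⟩
    · exact ⟨h.1, h.2⟩
    · exact H.adj_symm h
  loopless := by
    constructor
    rintro (a | a) h
    · exact G.ne_of_adj h rfl
    · exact H.ne_of_adj h rfl

/-- The statuses used to label the vertices of trees in the family `𝒯`. -/
inductive Label : Type
  | A | B | C
deriving DecidableEq

/-- The labeling of the path `P₅` assigning `A` to the two support vertices,
`C` to the two leaves and `B` to the center. -/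
def pathLabel : Fin 5 → Label
  | 0 => Label.C
  | 1 => Label.A
  | 2 => Label.B
  | 3 => Label.A
  | 4 => Label.C

/-- The family `𝒯` of labeled trees: it contains the labeled path `P₅`, and is closed
under operation `𝒪₁` (attach a new leaf labeled `C` to a vertex labeled `A`), operation
`𝒪₂` (attach a labeled path `P₅` to a degree-one vertex labeled `C`), and under
isomorphism of labeled graphs. -/
inductive TFamily : ∀ {V : Type}, SimpleGraph V → (V → Label) → Prop
  | base : TFamily (SimpleGraph.pathGraph 5) pathLabel
  | op1 {V : Type} {G : SimpleGraph V} {f : V → Label} (v : V)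
      (hv : f v = Label.A) (h : TFamily G f) :
      TFamily (attach G (⊥ : SimpleGraph (Fin 1)) v 0)
        (Sum.elim f (fun _ => Label.C))
  | op2 {V : Type} {G : SimpleGraph V} {f : V → Label} (v : V)
      (hv : f v = Label.C) (hdeg : (G.neighborSet v).ncard = 1) (h : TFamily G f) :
      TFamily (attach G (SimpleGraph.pathGraph 5) v 0) (Sum.elim f pathLabel)
  | iso {V W : Type} {G : SimpleGraph V} {H : SimpleGraph W} {f : V → Label}
      (e : G ≃g H) (h : TFamily G f) : TFamily H (fun w => f (e.symm w))

/-- The subdivided star with `t` leaves: center `none`, and for each `i : Fin t`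
a path `none — some (i,0) — some (i,1)`. -/
def subdividedStar (t : ℕ) : SimpleGraph (Option (Fin t × Fin 2)) :=
  SimpleGraph.fromRel (fun x y =>
    match x, y with
    | none, some p => p.2 = 0
    | some p, some q => p.1 = q.1 ∧ p.2 = 0 ∧ q.2 = 1
    | _, _ => False)

/-- The tree `Y` with three leaves, obtained from the star `K_{1,3}` with center `0`
by subdividing exactly one edge: edges `0-1`, `0-2`, `0-3`, `3-4`.  Its leaves are
`1`, `2`, `4`; the leaf-neighbors of the center are `1` and `2`. -/
def Ytree : SimpleGraph (Fin 5) :=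
  SimpleGraph.fromRel (fun x y =>
    (x = 0 ∧ y = 1) ∨ (x = 0 ∧ y = 2) ∨ (x = 0 ∧ y = 3) ∨ (x = 3 ∧ y = 4))

/-- An almost dominating set of `G` relative to `v`: dominates every vertex except
possibly `v`. -/
def IsAlmostDominatingSet {V : Type} (G : SimpleGraph V) (v : V) (S : Set V) : Prop :=
  ∀ w, w ≠ v → w ∉ S → ∃ u ∈ S, G.Adj u w

/-- The almost domination number `γ(G; v)`. -/
noncomputable def almostDominationNumber {V : Type} (G : SimpleGraph V) (v : V) : ℕ :=
  sInf {n | ∃ S : Set V, IsAlmostDominatingSet G v S ∧ S.ncard = n}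

/-- The family `𝒪` of trees: all trees obtainable from the path `P₄` by a finite
sequence of the operations `𝒪₁`–`𝒪₄` (and taking isomorphic copies). -/
inductive OFamily : ∀ {V : Type}, SimpleGraph V → Prop
  | base : OFamily (SimpleGraph.pathGraph 4)
  | op1 {V : Type} {G : SimpleGraph V} (v : V)
      (hv : ∃ S : Set V, IsSemitotalDominatingSet G S ∧
        S.ncard = semitotalDominationNumber G ∧ v ∈ S)
      (h : OFamily G) :
      OFamily (attach G (⊥ : SimpleGraph (Fin 1)) v 0)
  | op2short {V : Type} {G : SimpleGraph V} (v : V)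
      (hv : almostDominationNumber G v = dominationNumber G) (h : OFamily G) :
      OFamily (attach G (SimpleGraph.pathGraph 2) v 0)
  | op2long {V : Type} {G : SimpleGraph V} (v : V)
      (hv : almostDominationNumber G v = dominationNumber G) (h : OFamily G) :
      OFamily (attach G (SimpleGraph.pathGraph 5) v 0)
  | op3 {V : Type} {G : SimpleGraph V} (v : V) (t : ℕ) (ht : 2 ≤ t) (h : OFamily G) :
      OFamily (attach G (subdividedStar t) v none)
  | op4 {V : Type} {G : SimpleGraph V} (v : V) (h : OFamily G) :
      OFamily (attach G Ytree v 1)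
  | iso {V W : Type} {G : SimpleGraph V} {H : SimpleGraph W}
      (e : G ≃g H) (h : OFamily G) : OFamily H

/-!
If some minimum dominating set of a graph is semitotal, then `γ = γ_t2`, since every semitotal
dominating set dominates. This holds for `P₄` and survives each operation. When a piece `H` is
joined to `T` by an edge `vw`, a semitotal minimum dominating set of `T` extends by a set
`N ⊆ V(H)` (empty for `𝒪₁`) to a semitotal dominating set of the new tree. Conversely, `H` has
`|N|` vertices other than `w` with pairwise disjoint closed neighbourhoods, and a dominating set
of the new tree needs a separate vertex of `H` for each of them, so `γ` grows by at least `|N|`.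
Such a set could still save a vertex of `T` by containing `w`: for `𝒪₂` the hypothesis
`γ(T; v) = γ(T)` forbids this, and for `𝒪₁`, `𝒪₃`, `𝒪₄` the vertex `w` lies outside those
closed neighbourhoods, so it costs one more vertex of `H`.
-/

open Set Sum

lemma Set.pairwiseDisjoint_pair_of_disjoint {ι α : Type*} [PartialOrder α] [OrderBot α]
    {f : ι → α} {a b : ι} (h : Disjoint (f a) (f b)) : ({a, b} : Set ι).PairwiseDisjoint f :=
  (pairwiseDisjoint_singleton b f).insert fun _ hj _ => (mem_singleton_iff.mp hj) ▸ h

section Minimum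

variable {V : Type} {P : Set V → Prop}

lemma sInf_ncard_le {S : Set V} (hS : P S) : sInf {n | ∃ S, P S ∧ S.ncard = n} ≤ S.ncard :=
  Nat.sInf_le ⟨S, hS, rfl⟩

lemma exists_ncard_eq_sInf {S : Set V} (hS : P S) :
    ∃ T, P T ∧ T.ncard = sInf {n | ∃ S, P S ∧ S.ncard = n} :=
  Nat.sInf_mem (s := {n | ∃ S, P S ∧ S.ncard = n}) ⟨_, S, hS, rfl⟩

end Minimum

section Domination

variable {V : Type} {G : SimpleGraph V} {S : Set V} {v : V}

def closedNbhd (G : SimpleGraph V) (x : V) : Set V := insert x (G.neighborSet x)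

lemma dominationNumber_le (hS : IsDominatingSet G S) : dominationNumber G ≤ S.ncard :=
  sInf_ncard_le hS

lemma exists_isDominatingSet_ncard_eq (G : SimpleGraph V) :
    ∃ S, IsDominatingSet G S ∧ S.ncard = dominationNumber G :=
  exists_ncard_eq_sInf (P := IsDominatingSet G) (S := univ) fun v hv => absurd (mem_univ v) hv

lemma almostDominationNumber_le (hS : IsAlmostDominatingSet G v S) :
    almostDominationNumber G v ≤ S.ncard :=
  sInf_ncard_le hS

lemma IsAlmostDominatingSet.dominationNumber_le_ncard_add_one
    (hS : IsAlmostDominatingSet G v S) : dominationNumber G ≤ S.ncard + 1 := by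
  have hdom : IsDominatingSet G (insert v S) := by
    intro u hu
    obtain ⟨s, hs, hadj⟩ :=
      hS u (fun h => hu (h ▸ mem_insert v S)) (fun h => hu (mem_insert_of_mem v h))
    exact ⟨s, mem_insert_of_mem v hs, hadj⟩
  exact (dominationNumber_le hdom).trans (ncard_insert_le v S)

lemma IsDominatingSet.inter_closedNbhd_nonempty (hS : IsDominatingSet G S) (x : V) :
    (S ∩ closedNbhd G x).Nonempty := by
  by_cases hx : x ∈ S
  · exact ⟨x, hx, mem_insert x _⟩
  · obtain ⟨u, hu, hadj⟩ := hS x hx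
    exact ⟨u, hu, mem_insert_of_mem x hadj.symm⟩

lemma ncard_le_of_pairwiseDisjoint_closedNbhd {P : Set V} (hS : S.Finite)
    (hP : P.PairwiseDisjoint (closedNbhd G)) (hPS : ∀ x ∈ P, (S ∩ closedNbhd G x).Nonempty) :
    P.ncard ≤ S.ncard := by
  choose! f hf using hPS
  refine ncard_le_ncard_of_injOn f (fun x hx => (hf x hx).1) ?_ hS
  intro x hx y hy hxy
  by_contra hne
  exact Set.disjoint_left.mp (hP hx hy hne) (hf x hx).2 (hxy ▸ (hf y hy).2)

def HasSemitotalMinimumDominatingSet (G : SimpleGraph V) : Prop :=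
  ∃ S, IsSemitotalDominatingSet G S ∧ S.ncard = dominationNumber G

lemma hasSemitotalMinimumDominatingSet_of_ncard_le (hS : IsSemitotalDominatingSet G S)
    (h : S.ncard ≤ dominationNumber G) : HasSemitotalMinimumDominatingSet G :=
  ⟨S, hS, h.antisymm (dominationNumber_le hS.1)⟩

lemma HasSemitotalMinimumDominatingSet.dominationNumber_eq
    (hG : HasSemitotalMinimumDominatingSet G) :
    dominationNumber G = semitotalDominationNumber G := by
  obtain ⟨S, hS, hScard⟩ := hG
  obtain ⟨T, hT, hTcard⟩ := exists_ncard_eq_sInf hS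
  exact le_antisymm ((dominationNumber_le hT.1).trans_eq hTcard)
    ((sInf_ncard_le hS).trans_eq hScard)

end Domination

section Iso

variable {V W : Type} {G : SimpleGraph V} {H : SimpleGraph W} {S : Set V}

lemma IsDominatingSet.image_iso (e : G ≃g H) (hS : IsDominatingSet G S) :
    IsDominatingSet H (e '' S) := by
  intro x hx
  obtain ⟨u, hu, hadj⟩ := hS (e.symm x) fun h => hx ⟨_, h, e.apply_symm_apply x⟩
  exact ⟨e u, mem_image_of_mem e hu, by simpa using e.map_adj_iff.mpr hadj⟩

lemma WithinTwo.map_iso (e : G ≃g H) {a b : V} (h : WithinTwo G a b) :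
    WithinTwo H (e a) (e b) := by
  rcases h with h | ⟨c, hac, hcb⟩
  · exact Or.inl (e.map_adj_iff.mpr h)
  · exact Or.inr ⟨e c, e.map_adj_iff.mpr hac, e.map_adj_iff.mpr hcb⟩

lemma IsSemitotalDominatingSet.image_iso (e : G ≃g H) (hS : IsSemitotalDominatingSet G S) :
    IsSemitotalDominatingSet H (e '' S) := by
  refine ⟨hS.1.image_iso e, ?_⟩
  rintro _ ⟨a, ha, rfl⟩
  obtain ⟨u, hu, hne, h2⟩ := hS.2 a ha
  exact ⟨e u, mem_image_of_mem e hu, e.injective.ne hne, h2.map_iso e⟩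

lemma dominationNumber_le_of_iso (e : G ≃g H) : dominationNumber H ≤ dominationNumber G := by
  obtain ⟨S, hS, hScard⟩ := exists_isDominatingSet_ncard_eq G
  calc dominationNumber H ≤ (e '' S).ncard := dominationNumber_le (hS.image_iso e)
    _ = dominationNumber G := by rw [ncard_image_of_injective S e.injective, hScard]

lemma HasSemitotalMinimumDominatingSet.of_iso (e : G ≃g H)
    (hG : HasSemitotalMinimumDominatingSet G) : HasSemitotalMinimumDominatingSet H := by
  obtain ⟨S, hS, hScard⟩ := hG
  refine hasSemitotalMinimumDominatingSet_of_ncard_le (hS.image_iso e) ?_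
  rw [ncard_image_of_injective S e.injective, hScard]
  exact dominationNumber_le_of_iso e.symm

end Iso

section Attach

variable {V W : Type} {G : SimpleGraph V} {H : SimpleGraph W} {v : V} {w : W}
  {D : Set (V ⊕ W)}

lemma ncard_image_inl_union_image_inr [Finite V] [Finite W] (S : Set V) (N : Set W) :
    (inl '' S ∪ inr '' N : Set (V ⊕ W)).ncard = S.ncard + N.ncard := by
  rw [ncard_union_eq (isCompl_range_inl_range_inr.disjoint.mono (image_subset_range _ _)
      (image_subset_range _ _)), ncard_image_of_injective S inl_injective,
    ncard_image_of_injective N inr_injective]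

lemma ncard_preimage_inl_add_ncard_preimage_inr [Finite V] [Finite W] (D : Set (V ⊕ W)) :
    (inl ⁻¹' D).ncard + (inr ⁻¹' D).ncard = D.ncard := by
  rw [← ncard_image_inl_union_image_inr, image_preimage_inl_union_image_preimage_inr]

lemma IsDominatingSet.isAlmostDominatingSet_preimage_inl
    (hD : IsDominatingSet (attach G H v w) D) : IsAlmostDominatingSet G v (inl ⁻¹' D) := by
  intro u huv hu
  obtain ⟨a | b, hx, hadj⟩ := hD (inl u) hu
  · exact ⟨a, hx, hadj⟩
  · exact absurd hadj.1 huv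

lemma IsDominatingSet.preimage_inl (hD : IsDominatingSet (attach G H v w) D) (hw : inr w ∉ D) :
    IsDominatingSet G (inl ⁻¹' D) := by
  intro u hu
  obtain ⟨a | b, hx, hadj⟩ := hD (inl u) hu
  · exact ⟨a, hx, hadj⟩
  · obtain ⟨-, rfl⟩ := hadj
    exact absurd hx hw

lemma IsDominatingSet.preimage_inr_inter_closedNbhd_nonempty
    (hD : IsDominatingSet (attach G H v w) D) {x : W} (hx : x ≠ w) :
    (inr ⁻¹' D ∩ closedNbhd H x).Nonempty := by
  by_cases hxD : inr x ∈ D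
  · exact ⟨x, hxD, mem_insert x _⟩
  · obtain ⟨a | b, hb, hadj⟩ := hD (inr x) hxD
    · exact absurd hadj.2 hx
    · exact ⟨b, hb, mem_insert_of_mem x (H.adj_symm hadj)⟩

lemma almostDominationNumber_add_ncard_le_dominationNumber_attach [Finite V] [Finite W]
    {P : Set W} (hP : P.PairwiseDisjoint (closedNbhd H)) (hwP : w ∉ P) :
    almostDominationNumber G v + P.ncard ≤ dominationNumber (attach G H v w) := by
  obtain ⟨D, hD, hDcard⟩ := exists_isDominatingSet_ncard_eq (attach G H v w)
  have hG := almostDominationNumber_le hD.isAlmostDominatingSet_preimage_inl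
  have hH : P.ncard ≤ (inr ⁻¹' D).ncard :=
    ncard_le_of_pairwiseDisjoint_closedNbhd (toFinite _) hP fun x hx =>
      hD.preimage_inr_inter_closedNbhd_nonempty (ne_of_mem_of_not_mem hx hwP)
  rw [← hDcard, ← ncard_preimage_inl_add_ncard_preimage_inr D]
  omega

lemma dominationNumber_add_ncard_le_dominationNumber_attach [Finite V] [Finite W]
    {P : Set W} (hP : P.PairwiseDisjoint (closedNbhd H)) (hwP : ∀ x ∈ P, w ∉ closedNbhd H x) :
    dominationNumber G + P.ncard ≤ dominationNumber (attach G H v w) := by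
  obtain ⟨D, hD, hDcard⟩ := exists_isDominatingSet_ncard_eq (attach G H v w)
  have hH : P.ncard ≤ (inr ⁻¹' D \ {w}).ncard := by
    refine ncard_le_of_pairwiseDisjoint_closedNbhd (toFinite _) hP fun x hx => ?_
    obtain ⟨u, huD, hux⟩ := hD.preimage_inr_inter_closedNbhd_nonempty (x := x)
      fun h => hwP x hx (h ▸ mem_insert x _)
    exact ⟨u, ⟨huD, fun hu => hwP x hx ((mem_singleton_iff.mp hu) ▸ hux)⟩, hux⟩
  rw [← hDcard, ← ncard_preimage_inl_add_ncard_preimage_inr D]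
  by_cases hw : inr w ∈ D
  · have hG := hD.isAlmostDominatingSet_preimage_inl.dominationNumber_le_ncard_add_one
    have := ncard_sdiff_singleton_add_one (s := inr ⁻¹' D) hw
    omega
  · have hG := dominationNumber_le (hD.preimage_inl hw)
    have := ncard_le_ncard (sdiff_subset (s := inr ⁻¹' D) (t := {w}))
    omega

lemma WithinTwo.attach_inl {a b : V} (h : WithinTwo G a b) :
    WithinTwo (attach G H v w) (inl a) (inl b) := by
  rcases h with h | ⟨c, hac, hcb⟩
  · exact Or.inl h
  · exact Or.inr ⟨inl c, hac, hcb⟩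

lemma WithinTwo.attach_inr {a b : W} (h : WithinTwo H a b) :
    WithinTwo (attach G H v w) (inr a) (inr b) := by
  rcases h with h | ⟨c, hac, hcb⟩
  · exact Or.inl h
  · exact Or.inr ⟨inr c, hac, hcb⟩

/-- `w` needs no partner inside `N`: `v` or a dominator of `v` is within distance two of it. -/
lemma IsSemitotalDominatingSet.image_inl_union_image_inr {S : Set V} {N : Set W}
    (hS : IsSemitotalDominatingSet G S) (hN : IsDominatingSet H N)
    (hN2 : ∀ b ∈ N, b = w ∨ ∃ c ∈ N, c ≠ b ∧ WithinTwo H c b) :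
    IsSemitotalDominatingSet (attach G H v w) (inl '' S ∪ inr '' N) := by
  refine ⟨?_, ?_⟩
  · rintro (a | b) hx
    · obtain ⟨s, hs, hadj⟩ := hS.1 a fun ha => hx (Or.inl (mem_image_of_mem inl ha))
      exact ⟨inl s, Or.inl (mem_image_of_mem inl hs), hadj⟩
    · obtain ⟨c, hc, hadj⟩ := hN b fun hb => hx (Or.inr (mem_image_of_mem inr hb))
      exact ⟨inr c, Or.inr (mem_image_of_mem inr hc), hadj⟩
  · rintro _ (⟨a, ha, rfl⟩ | ⟨b, hb, rfl⟩)
    · obtain ⟨u, hu, hne, h2⟩ := hS.2 a ha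
      exact ⟨inl u, Or.inl (mem_image_of_mem inl hu), inl_injective.ne hne, h2.attach_inl⟩
    rcases hN2 b hb with rfl | ⟨c, hc, hne, h2⟩
    · by_cases hv : v ∈ S
      · exact ⟨inl v, Or.inl (mem_image_of_mem inl hv), inl_ne_inr, Or.inl ⟨rfl, rfl⟩⟩
      · obtain ⟨s, hs, hadj⟩ := hS.1 v hv
        exact ⟨inl s, Or.inl (mem_image_of_mem inl hs), inl_ne_inr,
          Or.inr ⟨inl v, hadj, rfl, rfl⟩⟩
    · exact ⟨inr c, Or.inr (mem_image_of_mem inr hc), inr_injective.ne hne, h2.attach_inr⟩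

lemma IsSemitotalDominatingSet.image_inl_attach_leaf {S : Set V}
    (hS : IsSemitotalDominatingSet G S) (hv : v ∈ S) :
    IsSemitotalDominatingSet (attach G (⊥ : SimpleGraph (Fin 1)) v 0) (inl '' S) := by
  refine ⟨?_, ?_⟩
  · rintro (a | b) hx
    · obtain ⟨s, hs, hadj⟩ := hS.1 a fun ha => hx (mem_image_of_mem inl ha)
      exact ⟨inl s, mem_image_of_mem inl hs, hadj⟩
    · exact ⟨inl v, mem_image_of_mem inl hv, rfl, Subsingleton.elim b 0⟩
  · rintro _ ⟨a, ha, rfl⟩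
    obtain ⟨u, hu, hne, h2⟩ := hS.2 a ha
    exact ⟨inl u, mem_image_of_mem inl hu, inl_injective.ne hne, h2.attach_inl⟩

lemma HasSemitotalMinimumDominatingSet.attach_of_dominationNumber_add_le [Finite V] [Finite W]
    (hG : HasSemitotalMinimumDominatingSet G) {N : Set W} (hN : IsDominatingSet H N)
    (hN2 : ∀ b ∈ N, b = w ∨ ∃ c ∈ N, c ≠ b ∧ WithinTwo H c b)
    (hlow : dominationNumber G + N.ncard ≤ dominationNumber (attach G H v w)) :
    HasSemitotalMinimumDominatingSet (attach G H v w) := by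
  obtain ⟨S, hS, hScard⟩ := hG
  refine hasSemitotalMinimumDominatingSet_of_ncard_le (hS.image_inl_union_image_inr hN hN2) ?_
  rwa [ncard_image_inl_union_image_inr, hScard]

lemma HasSemitotalMinimumDominatingSet.attach_of_isSemitotalDominatingSet [Finite V] [Finite W]
    (hG : HasSemitotalMinimumDominatingSet G) {N : Set W}
    (hN : IsSemitotalDominatingSet H N)
    (hlow : dominationNumber G + N.ncard ≤ dominationNumber (attach G H v w)) :
    HasSemitotalMinimumDominatingSet (attach G H v w) :=
  hG.attach_of_dominationNumber_add_le hN.1 (fun b hb => Or.inr (hN.2 b hb)) hlow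

end Attach

section Pieces

variable {V : Type} {G : SimpleGraph V} {v : V} [Finite V]

lemma HasSemitotalMinimumDominatingSet.attach_leaf (hG : HasSemitotalMinimumDominatingSet G)
    (hv : ∃ S : Set V, IsSemitotalDominatingSet G S ∧
      S.ncard = semitotalDominationNumber G ∧ v ∈ S) :
    HasSemitotalMinimumDominatingSet (attach G (⊥ : SimpleGraph (Fin 1)) v 0) := by
  obtain ⟨S, hS, hScard, hvS⟩ := hv
  refine hasSemitotalMinimumDominatingSet_of_ncard_le (hS.image_inl_attach_leaf hvS) ?_
  rw [ncard_image_of_injective S inl_injective, hScard, ← hG.dominationNumber_eq]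
  simpa using dominationNumber_add_ncard_le_dominationNumber_attach (G := G) (v := v)
    (H := (⊥ : SimpleGraph (Fin 1))) (w := 0) (P := ∅) pairwiseDisjoint_empty (by simp)

lemma disjoint_closedNbhd_pathGraph {n : ℕ} {i j : Fin n} (h : i.val + 2 < j.val) :
    Disjoint (closedNbhd (pathGraph n) i) (closedNbhd (pathGraph n) j) := by
  rw [Set.disjoint_left]
  intro u hi hj
  simp only [closedNbhd, mem_insert_iff, mem_neighborSet, pathGraph_adj, Fin.ext_iff] at hi hj
  omega

lemma hasSemitotalMinimumDominatingSet_pathGraph_four :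
    HasSemitotalMinimumDominatingSet (pathGraph 4) := by
  have hS : IsSemitotalDominatingSet (pathGraph 4) {1, 2} := by
    simp only [IsSemitotalDominatingSet, IsDominatingSet, WithinTwo, mem_insert_iff,
      mem_singleton_iff, pathGraph_adj]
    decide
  refine hasSemitotalMinimumDominatingSet_of_ncard_le hS ?_
  obtain ⟨D, hD, hDcard⟩ := exists_isDominatingSet_ncard_eq (pathGraph 4)
  calc ({1, 2} : Set (Fin 4)).ncard = ({0, 3} : Set (Fin 4)).ncard := by
        rw [ncard_pair (by decide), ncard_pair (by decide)]
    _ ≤ D.ncard := ncard_le_of_pairwiseDisjoint_closedNbhd (toFinite D)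
        (pairwiseDisjoint_pair_of_disjoint (disjoint_closedNbhd_pathGraph (by decide)))
        fun x _ => hD.inter_closedNbhd_nonempty x
    _ = dominationNumber (pathGraph 4) := hDcard

lemma HasSemitotalMinimumDominatingSet.attach_pathGraph_two
    (hG : HasSemitotalMinimumDominatingSet G)
    (hv : almostDominationNumber G v = dominationNumber G) :
    HasSemitotalMinimumDominatingSet (attach G (pathGraph 2) v 0) := by
  have hN : IsDominatingSet (pathGraph 2) {0} := by
    simp only [IsDominatingSet, mem_singleton_iff, pathGraph_adj]
    decide
  refine hG.attach_of_dominationNumber_add_le hN (fun b hb => Or.inl hb) ?_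
  calc dominationNumber G + ({0} : Set (Fin 2)).ncard
      = almostDominationNumber G v + ({1} : Set (Fin 2)).ncard := by
        rw [hv, ncard_singleton, ncard_singleton]
    _ ≤ _ := almostDominationNumber_add_ncard_le_dominationNumber_attach
        (pairwiseDisjoint_singleton 1 _) (by simp)

lemma HasSemitotalMinimumDominatingSet.attach_pathGraph_five
    (hG : HasSemitotalMinimumDominatingSet G)
    (hv : almostDominationNumber G v = dominationNumber G) :
    HasSemitotalMinimumDominatingSet (attach G (pathGraph 5) v 0) := by
  have hN : IsSemitotalDominatingSet (pathGraph 5) {1, 3} := by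
    simp only [IsSemitotalDominatingSet, IsDominatingSet, WithinTwo, mem_insert_iff,
      mem_singleton_iff, pathGraph_adj]
    decide
  refine hG.attach_of_isSemitotalDominatingSet hN ?_
  calc dominationNumber G + ({1, 3} : Set (Fin 5)).ncard
      = almostDominationNumber G v + ({1, 4} : Set (Fin 5)).ncard := by
        rw [hv, ncard_pair (by decide), ncard_pair (by decide)]
    _ ≤ _ := almostDominationNumber_add_ncard_le_dominationNumber_attach
        (pairwiseDisjoint_pair_of_disjoint (disjoint_closedNbhd_pathGraph (by decide))) (by simp)

section SubdividedStar

variable {t : ℕ}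

lemma subdividedStar_adj_none (i : Fin t) : (subdividedStar t).Adj none (some (i, 0)) :=
  (fromRel_adj _ _ _).mpr ⟨(Option.some_ne_none _).symm, Or.inl rfl⟩

lemma subdividedStar_adj_leaf (i : Fin t) : (subdividedStar t).Adj (some (i, 0)) (some (i, 1)) :=
  (fromRel_adj _ _ _).mpr ⟨by simp, Or.inl ⟨rfl, rfl, rfl⟩⟩

lemma mem_closedNbhd_subdividedStar_leaf {i : Fin t} {u : Option (Fin t × Fin 2)}
    (hu : u ∈ closedNbhd (subdividedStar t) (some (i, 1))) :
    u = some (i, 0) ∨ u = some (i, 1) := by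
  rcases hu with rfl | hu
  · exact Or.inr rfl
  · rw [mem_neighborSet, subdividedStar, fromRel_adj] at hu
    rcases u with _ | ⟨j, c⟩
    · simp at hu
    · obtain ⟨-, rfl, rfl⟩ : _ ∧ j = i ∧ c = 0 := by simpa using hu
      exact Or.inl rfl

lemma isSemitotalDominatingSet_subdividedStar (ht : 2 ≤ t) :
    IsSemitotalDominatingSet (subdividedStar t) (range fun i => some (i, 0)) := by
  have : Nontrivial (Fin t) := Fin.nontrivial_iff_two_le.mpr ht
  refine ⟨?_, ?_⟩
  · rintro (_ | ⟨i, c⟩) hx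
    · exact ⟨some (⟨0, by omega⟩, 0), mem_range_self _, (subdividedStar_adj_none _).symm⟩
    · obtain rfl : c = 1 := by
        rcases c with ⟨_ | _ | _, hc⟩
        · exact absurd ⟨i, rfl⟩ hx
        · rfl
        · omega
      exact ⟨some (i, 0), mem_range_self i, subdividedStar_adj_leaf i⟩
  · rintro _ ⟨i, rfl⟩
    obtain ⟨j, hji⟩ := exists_ne i
    exact ⟨some (j, 0), mem_range_self j, by simpa using hji,
      Or.inr ⟨none, (subdividedStar_adj_none j).symm, subdividedStar_adj_none i⟩⟩

lemma HasSemitotalMinimumDominatingSet.attach_subdividedStar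
    (hG : HasSemitotalMinimumDominatingSet G) (ht : 2 ≤ t) :
    HasSemitotalMinimumDominatingSet (attach G (subdividedStar t) v none) := by
  refine hG.attach_of_isSemitotalDominatingSet (isSemitotalDominatingSet_subdividedStar ht) ?_
  have hinj (c : Fin 2) : Function.Injective fun i : Fin t => some (i, c) := fun i j h => by
    simpa using h
  have hP : (range fun i : Fin t => some (i, 1)).PairwiseDisjoint
      (closedNbhd (subdividedStar t)) := by
    rintro _ ⟨i, rfl⟩ _ ⟨j, rfl⟩ hne
    refine Set.disjoint_left.mpr fun u hi hj => hne ?_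
    rcases mem_closedNbhd_subdividedStar_leaf hi with rfl | rfl <;>
      rcases mem_closedNbhd_subdividedStar_leaf hj with h | h <;> simp_all
  calc dominationNumber G + (range fun i : Fin t => some (i, (0 : Fin 2))).ncard
      = dominationNumber G + (range fun i : Fin t => some (i, (1 : Fin 2))).ncard := by
        rw [ncard_range_of_injective (hinj 0), ncard_range_of_injective (hinj 1)]
    _ ≤ _ := dominationNumber_add_ncard_le_dominationNumber_attach hP <| by
        rintro _ ⟨i, rfl⟩ h
        simpa using mem_closedNbhd_subdividedStar_leaf h

end SubdividedStar

instance : DecidableRel Ytree.Adj := fun x y => decidable_of_iff _ (fromRel_adj _ x y).symm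

lemma HasSemitotalMinimumDominatingSet.attach_ytree (hG : HasSemitotalMinimumDominatingSet G) :
    HasSemitotalMinimumDominatingSet (attach G Ytree v 1) := by
  have hN : IsSemitotalDominatingSet Ytree {0, 3} := by
    simp only [IsSemitotalDominatingSet, IsDominatingSet, WithinTwo, mem_insert_iff,
      mem_singleton_iff]
    decide
  refine hG.attach_of_isSemitotalDominatingSet hN ?_
  calc dominationNumber G + ({0, 3} : Set (Fin 5)).ncard
      = dominationNumber G + ({2, 4} : Set (Fin 5)).ncard := by
        rw [ncard_pair (by decide), ncard_pair (by decide)]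
    _ ≤ _ := by
      refine dominationNumber_add_ncard_le_dominationNumber_attach
        (pairwiseDisjoint_pair_of_disjoint ?_) ?_
      · rw [Set.disjoint_left]
        simp only [closedNbhd, mem_insert_iff, mem_neighborSet]
        decide
      · simp only [closedNbhd, mem_insert_iff, mem_singleton_iff, mem_neighborSet]
        decide

end Pieces

lemma OFamily.finite {V : Type} {G : SimpleGraph V} (h : OFamily G) : Finite V := by
  induction h with
  | iso e _ ih => exact Finite.of_equiv _ e.toEquiv
  | _ => infer_instance

lemma OFamily.hasSemitotalMinimumDominatingSet {V : Type} {G : SimpleGraph V} (h : OFamily G) :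
    HasSemitotalMinimumDominatingSet G := by
  induction h with
  | base => exact hasSemitotalMinimumDominatingSet_pathGraph_four
  | op1 v hv h ih => have := h.finite; exact ih.attach_leaf hv
  | op2short v hv h ih => have := h.finite; exact ih.attach_pathGraph_two hv
  | op2long v hv h ih => have := h.finite; exact ih.attach_pathGraph_five hv
  | op3 v t ht h ih => have := h.finite; exact ih.attach_subdividedStar ht
  | op4 v h ih => have := h.finite; exact ih.attach_ytree
  | iso e _ ih => exact ih.of_iso e

theorem oFamily_domination_eq_semitotal_general {V : Type} (T : SimpleGraph V) (h : OFamily T) :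
    dominationNumber T = semitotalDominationNumber T :=
  h.hasSemitotalMinimumDominatingSet.dominationNumber_eq

/-- If a tree `T` belongs to the family `𝒪`, then `γ(T) = γ_t2(T)`. -/
theorem oFamily_domination_eq_semitotal {V : Type} [Fintype V] (T : SimpleGraph V)
    (hT : T.IsTree) (h : OFamily T) :
    dominationNumber T = semitotalDominationNumber T :=
  oFamily_domination_eq_semitotal_general T h
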